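/- Let M = (M_k) be any positive sequence. Then the Roumieu sequence space F^{{M}} equals the intersection of the Beurling spaces F^{(L)} over all positive sequences L with M ◁ L, and also equals the intersection of the Roumieu spaces F^{{L}} over all positive sequences L with M ◁ L. More precisely, for any real sequence f = (f_k) with f ∉ F^{{M}}, there exists a positive sequence L with M ◁ L and f ∉ F^{{L}}. -/

import Mathlib

/-!
If `f ∉ F^{{M}}`, then for every level `n` the inequality `|f k| > (n+1)^(2k+1) k! M k` holds
for infinitely many `k`, so one can pick a strictly increasing sequence of witnesses `φ n`.
Let `ν k` be the largest `n` with `φ n ≤ k`; it tends to infinity and `ν (φ n) ≤ n`.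
Then `L k = M k (ν k + 1)^k` satisfies `M ◁ L`, because `(ν k + 1)^k` eventually beats every
geometric sequence `ρ⁻ᵏ`, yet at `k = φ n` the bound `|f k| ≤ C ρ^k k! L k` fails once
`C, ρ ≤ n + 1`. Conversely `F^{{M}} ⊆ F^{(L)} ⊆ F^{{L}}` whenever `M ◁ L`.
-/

/-- The sequence space `F^M_ρ`. -/
def seqSpace (M : ℕ → ℝ) (ρ : ℝ) : Set (ℕ → ℝ) :=
  {f | ∃ C > (0 : ℝ), ∀ k : ℕ, |f k| ≤ C * ρ ^ k * (Nat.factorial k) * M k}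

/-- The Roumieu sequence space `F^{{M}} = ⋃_{ρ>0} F^M_ρ`. -/
def seqSpaceRoumieu (M : ℕ → ℝ) : Set (ℕ → ℝ) :=
  ⋃ ρ > (0 : ℝ), seqSpace M ρ

/-- The Beurling sequence space `F^{(M)} = ⋂_{ρ>0} F^M_ρ`. -/
def seqSpaceBeurling (M : ℕ → ℝ) : Set (ℕ → ℝ) :=
  ⋂ ρ > (0 : ℝ), seqSpace M ρ

/-- `M ◁ L`. -/
def seqLhd (M L : ℕ → ℝ) : Prop :=
  ∀ ρ > (0 : ℝ), ∃ C > (0 : ℝ), ∀ k : ℕ, M k ≤ C * ρ ^ k * L k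

open Filter

lemma exists_pos_forall_le_of_eventually_le {w : ℕ → ℝ} {C : ℝ}
    (h : ∀ᶠ k in atTop, w k ≤ C) : ∃ C' > (0 : ℝ), ∀ k, w k ≤ C' := by
  obtain ⟨B, hB⟩ := (show IsBoundedUnder (· ≤ ·) atTop w from ⟨C, h⟩).bddAbove_range
  exact ⟨max B 1, by positivity, fun k => (hB ⟨k, rfl⟩).trans (le_max_left _ _)⟩

lemma StrictMono.exists_tendsto_atTop_apply_le {φ : ℕ → ℕ} (hφ : StrictMono φ) :
    ∃ ν : ℕ → ℕ, Tendsto ν atTop atTop ∧ ∀ n, ν (φ n) ≤ n := by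
  refine ⟨fun k => Nat.findGreatest (φ · ≤ k) k, ?_, fun n => ?_⟩
  · exact tendsto_atTop_atTop.2 fun n =>
      ⟨φ n, fun k hk => Nat.le_findGreatest ((hφ.id_le n).trans hk) hk⟩
  · exact hφ.le_iff_le.1 <|
      Nat.findGreatest_spec (P := (φ · ≤ φ n)) (hφ.id_le n) le_rfl

section SeqSpace

variable {M L f : ℕ → ℝ}

lemma mem_seqSpace_of_eventually_le (hM : ∀ k, 0 < M k) {ρ C : ℝ} (hρ : 0 < ρ)
    (h : ∀ᶠ k in atTop, |f k| ≤ C * ρ ^ k * k.factorial * M k) : f ∈ seqSpace M ρ := by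
  have hw : ∀ k, 0 < ρ ^ k * k.factorial * M k := fun k => by have := hM k; positivity
  obtain ⟨C', hC', hle⟩ := exists_pos_forall_le_of_eventually_le (C := C)
    (w := fun k => |f k| / (ρ ^ k * k.factorial * M k)) <| h.mono fun k hk => by
      rw [div_le_iff₀ (hw k)]; linarith
  refine ⟨C', hC', fun k => ?_⟩
  have := (div_le_iff₀ (hw k)).1 (hle k)
  linarith

lemma frequently_lt_abs_of_notMem_seqSpaceRoumieu (hM : ∀ k, 0 < M k)
    (hf : f ∉ seqSpaceRoumieu M) {ρ : ℝ} (hρ : 0 < ρ) (C : ℝ) :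
    ∃ᶠ k in atTop, C * ρ ^ k * k.factorial * M k < |f k| := by
  have : ¬∀ᶠ k in atTop, |f k| ≤ C * ρ ^ k * k.factorial * M k := fun h =>
    hf (Set.mem_iUnion₂.2 ⟨ρ, hρ, mem_seqSpace_of_eventually_le hM hρ h⟩)
  simpa only [not_le] using not_eventually.1 this

lemma seqLhd_mul_pow_of_tendsto (hM : ∀ k, 0 ≤ M k) {h : ℕ → ℝ} (hpos : ∀ k, 0 < h k)
    (hh : Tendsto h atTop atTop) : seqLhd M fun k => M k * h k ^ k := by
  intro ρ hρ
  have hρh : ∀ k, 0 < (ρ * h k) ^ k := fun k => by have := hpos k; positivity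
  have hev : ∀ᶠ k in atTop, ((ρ * h k) ^ k)⁻¹ ≤ 1 :=
    (hh.eventually_ge_atTop ρ⁻¹).mono fun k hk =>
      inv_le_one_of_one_le₀ (one_le_pow₀ ((inv_le_iff_one_le_mul₀' hρ).1 hk))
  obtain ⟨C, hC, hle⟩ := exists_pos_forall_le_of_eventually_le hev
  refine ⟨C, hC, fun k => ?_⟩
  have h1 : 1 ≤ C * (ρ * h k) ^ k := by
    have := (inv_le_iff_one_le_mul₀ (hρh k)).1 (hle k); linarith
  calc M k = M k * 1 := (mul_one _).symm
    _ ≤ M k * (C * (ρ * h k) ^ k) := mul_le_mul_of_nonneg_left h1 (hM k)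
    _ = C * ρ ^ k * (M k * h k ^ k) := by ring

lemma exists_seqLhd_notMem_seqSpaceRoumieu (hM : ∀ k, 0 < M k)
    (hf : f ∉ seqSpaceRoumieu M) :
    ∃ L : ℕ → ℝ, (∀ k, 0 < L k) ∧ seqLhd M L ∧ f ∉ seqSpaceRoumieu L := by
  obtain ⟨φ, hφ, hφf⟩ := extraction_forall_of_frequently fun n : ℕ =>
    frequently_lt_abs_of_notMem_seqSpaceRoumieu hM hf (ρ := ((n : ℝ) + 1) ^ 2)
      (by positivity) ((n : ℝ) + 1)
  obtain ⟨ν, hν, hνφ⟩ := hφ.exists_tendsto_atTop_apply_le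
  have hh : Tendsto (fun k => (ν k : ℝ) + 1) atTop atTop :=
    tendsto_atTop_add_const_right _ 1 (tendsto_natCast_atTop_atTop.comp hν)
  refine ⟨fun k => M k * ((ν k : ℝ) + 1) ^ k, fun k => by have := hM k; positivity,
    seqLhd_mul_pow_of_tendsto (fun k => (hM k).le) (fun k => by positivity) hh, ?_⟩
  intro hfL
  obtain ⟨ρ, hρ, C, hC, hbound⟩ : ∃ ρ > (0 : ℝ), f ∈ seqSpace _ ρ := by
    simpa [seqSpaceRoumieu] using hfL
  obtain ⟨n, hn⟩ := exists_nat_ge (max ρ C)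
  set k := φ n
  have hρn : ρ ≤ (n : ℝ) + 1 := by linarith [le_max_left ρ C]
  have hCn : C ≤ (n : ℝ) + 1 := by linarith [le_max_right ρ C]
  have hνk : (ν k : ℝ) + 1 ≤ (n : ℝ) + 1 := by exact_mod_cast Nat.succ_le_succ (hνφ n)
  have hMk := hM k
  have : |f k| ≤ ((n : ℝ) + 1) * (((n : ℝ) + 1) ^ 2) ^ k * k.factorial * M k :=
    calc |f k| ≤ C * ρ ^ k * k.factorial * (M k * ((ν k : ℝ) + 1) ^ k) := hbound k
      _ ≤ ((n : ℝ) + 1) * ((n : ℝ) + 1) ^ k * k.factorial * (M k * ((n : ℝ) + 1) ^ k) := by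
        gcongr
      _ = ((n : ℝ) + 1) * (((n : ℝ) + 1) ^ 2) ^ k * k.factorial * M k := by
        rw [sq, mul_pow]; ring
  exact (hφf n).not_ge this

lemma seqSpaceRoumieu_subset_seqSpaceBeurling (hML : seqLhd M L) :
    seqSpaceRoumieu M ⊆ seqSpaceBeurling L := by
  intro f hf
  obtain ⟨ρ₀, hρ₀, C₀, hC₀, h₀⟩ : ∃ ρ₀ > (0 : ℝ), f ∈ seqSpace M ρ₀ := by
    simpa [seqSpaceRoumieu] using hf
  refine Set.mem_iInter₂.2 fun ρ hρ => ?_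
  obtain ⟨C₁, hC₁, h₁⟩ := hML (ρ / ρ₀) (by positivity)
  refine ⟨C₀ * C₁, by positivity, fun k => ?_⟩
  calc |f k| ≤ C₀ * ρ₀ ^ k * k.factorial * M k := h₀ k
    _ ≤ C₀ * ρ₀ ^ k * k.factorial * (C₁ * (ρ / ρ₀) ^ k * L k) := by gcongr; exact h₁ k
    _ = C₀ * C₁ * ρ ^ k * k.factorial * L k := by rw [div_pow]; field_simp

lemma seqSpaceBeurling_subset_seqSpaceRoumieu : seqSpaceBeurling L ⊆ seqSpaceRoumieu L :=
  fun _ hf => Set.mem_iUnion₂.2 ⟨1, one_pos, Set.mem_iInter₂.1 hf 1 one_pos⟩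

end SeqSpace

/-- For any positive sequence `M`, the Roumieu space is the intersection of all
Beurling (equivalently, all Roumieu) spaces `F^{(L)}` (resp. `F^{{L}}`) over
positive `L` with `M ◁ L`; more precisely, every `f ∉ F^{{M}}` lies outside
some `F^{{L}}` with `M ◁ L`. -/
theorem seqSpaceRoumieu_eq_iInter (M : ℕ → ℝ) (hpos : ∀ k, 0 < M k) :
    (seqSpaceRoumieu M
        = ⋂ L ∈ {L : ℕ → ℝ | (∀ k, 0 < L k) ∧ seqLhd M L}, seqSpaceBeurling L)
    ∧ (seqSpaceRoumieu M
        = ⋂ L ∈ {L : ℕ → ℝ | (∀ k, 0 < L k) ∧ seqLhd M L}, seqSpaceRoumieu L)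
    ∧ (∀ f : ℕ → ℝ, f ∉ seqSpaceRoumieu M →
        ∃ L : ℕ → ℝ, (∀ k, 0 < L k) ∧ seqLhd M L ∧ f ∉ seqSpaceRoumieu L) := by
  set 𝓛 := {L : ℕ → ℝ | (∀ k, 0 < L k) ∧ seqLhd M L}
  have hRB : seqSpaceRoumieu M ⊆ ⋂ L ∈ 𝓛, seqSpaceBeurling L :=
    Set.subset_iInter₂ fun _ hL => seqSpaceRoumieu_subset_seqSpaceBeurling hL.2
  have hBR : ⋂ L ∈ 𝓛, seqSpaceBeurling L ⊆ ⋂ L ∈ 𝓛, seqSpaceRoumieu L :=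
    Set.iInter₂_mono fun _ _ => seqSpaceBeurling_subset_seqSpaceRoumieu
  have hRR : ⋂ L ∈ 𝓛, seqSpaceRoumieu L ⊆ seqSpaceRoumieu M := fun f hf => by
    by_contra hfM
    obtain ⟨L, hL, hML, hfL⟩ := exists_seqLhd_notMem_seqSpaceRoumieu hpos hfM
    exact hfL (Set.mem_iInter₂.1 hf L ⟨hL, hML⟩)
  exact ⟨hRB.antisymm (hBR.trans hRR), (hRB.trans hBR).antisymm hRR,
    fun _ hf => exists_seqLhd_notMem_seqSpaceRoumieu hpos hf⟩
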